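/- arXiv:2309.00967 — 2 statements merged into one kernel-verified Lean document; each statement's English description precedes it below -/
import Mathlib

section
/- In the real Okubo algebra 𝒪 with idempotent e = diag(2,−1,−1), define x̄ = ⟨x,e⟩·e − x, τ(x) = e*(e*x), τ²(x) = (x*e)*e, and the unitalized product x·y = (e*x)*(y*e). Then for all x, y ∈ 𝒪 one has x*y = τ(x̄)·τ²(ȳ), i.e. x*y = (e*τ(x̄)) * (τ²(ȳ)*e). -/
open Matrix Complex

noncomputable section

/-- `3 × 3` complex matrices. -/
abbrev M3 : Type := Matrix (Fin 3) (Fin 3) ℂ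

/-- The real Okubo algebra: `3 × 3` traceless Hermitian complex matrices. -/
def Okubo : Set M3 := {x | x.IsHermitian ∧ x.trace = 0}

/-- The constant `μ = (3 + i√3)/6`. -/
def okMu : ℂ := (3 + (Real.sqrt 3 : ℂ) * Complex.I) / 6

/-- The Okubo product `x*y = μ·(xy) + μ̄·(yx) − (1/3)Tr(xy)·Id`. -/
def omul (x y : M3) : M3 :=
  okMu • (x * y) + (starRingEnd ℂ) okMu • (y * x) - ((1 / 3 : ℂ) * (x * y).trace) • (1 : M3)

/-- The Okubic norm `n(x) = (1/6)Tr(x²)` (real-valued on Hermitian matrices). -/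
def onorm (x : M3) : ℝ := (1 / 6) * ((x * x).trace).re

/-- The polar form `⟨x,y⟩ = n(x+y) − n(x) − n(y)` of the Okubic norm. -/
def opolar (x y : M3) : ℝ := onorm (x + y) - onorm x - onorm y


/-- The idempotent `e = diag(2, −1, −1)` of the real Okubo algebra. -/
def eOk : M3 := Matrix.diagonal ![2, -1, -1]

/-- The conjugation `x̄ = ⟨x,e⟩ • e − x`. -/
def okBar (x : M3) : M3 := opolar x eOk • eOk - x

/-- The order-three automorphism `τ(x) = e*(e*x)`. -/
def tauOk (x : M3) : M3 := omul eOk (omul eOk x)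

/-- Its square `τ²(x) = (x*e)*e`. -/
def tauOkSq (x : M3) : M3 := omul (omul x eOk) eOk

/-- The unitalized (octonion) product `x·y = (e*x)*(y*e)`. -/
def udot (x y : M3) : M3 := omul (omul eOk x) (omul y eOk)

/-!
For a traceless `3 × 3` matrix `a` Cayley–Hamilton reads `a³ = ½ tr(a²) a + ⅓ tr(a³)`; its full
polarization together with `μ + μ̄ = 1`, `μ μ̄ = 1/3` gives the linearized symmetric composition
identities `x*(y*z) + z*(y*x) = (x*y)*z + (z*y)*x = ⟨x,z⟩ y` on traceless matrices, where
`⟨x,z⟩ = ⅓ tr(xz)`. Taking two of the three arguments equal to the idempotent `e` (with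
`⟨e,e⟩ = 2`) yields `e*(w*e) = (e*w)*e = w`, `τ(w) = ⟨e,w⟩ e - w*e` and
`τ²(w) = ⟨w,e⟩ e - e*w`. Hence `e*τ(w) = ⟨e,w⟩ e - w` and `τ²(w)*e = ⟨w,e⟩ e - w`, and for
`w = x̄ = ⟨x,e⟩ e - x` (so that `⟨e,x̄⟩ = ⟨x,e⟩`) both collapse to `x`. The unitalized product
`τ(x̄)·τ²(ȳ) = (e*τ(x̄))*(τ²(ȳ)*e)` is therefore `x*y`.
-/

theorem Matrix.polarized_cayley_hamilton_of_trace_eq_zero {R : Type*} [CommRing R]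
    {x y z : Matrix (Fin 3) (Fin 3) R} (hx : x.trace = 0) (hy : y.trace = 0) (hz : z.trace = 0) :
    x * y * z + x * z * y + y * x * z + y * z * x + z * x * y + z * y * x =
      (x * y).trace • z + (y * z).trace • x + (z * x).trace • y +
        ((x * y * z).trace + (x * z * y).trace) • (1 : Matrix (Fin 3) (Fin 3) R) := by
  simp only [trace_fin_three] at hx hy hz
  have hx22 : x 2 2 = -x 0 0 - x 1 1 := by linear_combination hx
  have hy22 : y 2 2 = -y 0 0 - y 1 1 := by linear_combination hy
  have hz22 : z 2 2 = -z 0 0 - z 1 1 := by linear_combination hz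
  ext i j
  fin_cases i <;> fin_cases j <;>
    simp [trace_fin_three, mul_apply, Fin.sum_univ_three, hx22, hy22, hz22] <;> ring

lemma okMu_conj : (starRingEnd ℂ) okMu = 1 - okMu := by
  simp only [okMu, map_div₀, map_add, map_mul, conj_I, conj_ofReal, map_ofNat]
  ring

lemma okMu_add_conj : okMu + (starRingEnd ℂ) okMu = 1 := by
  rw [okMu_conj]
  ring

lemma okMu_mul_conj : okMu * (starRingEnd ℂ) okMu = 1 / 3 := by
  have hsqrt : ((Real.sqrt 3 : ℝ) : ℂ) ^ 2 = 3 := by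
    norm_cast
    exact Real.sq_sqrt (by norm_num)
  rw [okMu_conj, okMu]
  linear_combination (-I ^ 2 / 36) * hsqrt - (1 / 12 : ℂ) * I_sq

section OkuboProduct

lemma omul_sub (x y z : M3) : omul x (y - z) = omul x y - omul x z := by
  simp only [omul, mul_sub, sub_mul, trace_sub, sub_smul, smul_sub]
  abel

lemma sub_omul (x y z : M3) : omul (x - y) z = omul x z - omul y z := by
  simp only [omul, mul_sub, sub_mul, trace_sub, sub_smul, smul_sub]
  abel

lemma omul_smul (c : ℂ) (x y : M3) : omul x (c • y) = c • omul x y := by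
  simp only [omul, mul_smul_comm, smul_mul_assoc, trace_smul, smul_eq_mul]
  module

lemma smul_omul (c : ℂ) (x y : M3) : omul (c • x) y = c • omul x y := by
  simp only [omul, mul_smul_comm, smul_mul_assoc, trace_smul, smul_eq_mul]
  module

lemma transpose_omul (x y : M3) : (omul x y)ᵀ = omul yᵀ xᵀ := by
  simp only [omul, transpose_sub, transpose_add, transpose_smul, transpose_one, ← transpose_mul,
    trace_transpose]

variable {x y z : M3}

lemma omul_omul_add_omul_omul (hx : x.trace = 0) (hy : y.trace = 0) (hz : z.trace = 0) :
    omul x (omul y z) + omul z (omul y x) = ((1 / 3 : ℂ) * (x * z).trace) • y := by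
  have hCH := polarized_cayley_hamilton_of_trace_eq_zero hx hy hz
  simp only [omul, mul_add, add_mul, mul_sub, sub_mul, smul_mul_assoc, mul_smul_comm, mul_one,
    one_mul, trace_add, trace_sub, trace_smul, hx, hz, smul_eq_mul, ← mul_assoc]
  linear_combination (norm := skip) (1 / 3 : ℂ) • hCH
  match_scalars <;> grind [okMu_add_conj, okMu_mul_conj, trace_mul_cycle, trace_mul_comm]

lemma omul_omul_add_omul_omul' (hx : x.trace = 0) (hy : y.trace = 0) (hz : z.trace = 0) :
    omul (omul x y) z + omul (omul z y) x = ((1 / 3 : ℂ) * (x * z).trace) • y := by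
  apply transpose_injective
  rw [transpose_add, transpose_omul, transpose_omul, transpose_omul, transpose_omul,
    omul_omul_add_omul_omul (by rwa [trace_transpose]) (by rwa [trace_transpose])
      (by rwa [trace_transpose]),
    ← transpose_mul, trace_transpose, transpose_smul]

end OkuboProduct

section Idempotent

variable {w : M3}

lemma trace_eOk : eOk.trace = 0 := by
  simp [eOk, trace, Fin.sum_univ_three]
  norm_num

lemma trace_eOk_mul_eOk : (eOk * eOk).trace = 6 := by
  simp [eOk, trace, Fin.sum_univ_three]
  norm_num

lemma isHermitian_eOk : eOk.IsHermitian := by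
  refine isHermitian_diagonal_of_self_adjoint _ ?_
  ext i
  fin_cases i <;> simp

lemma omul_eOk_eOk : omul eOk eOk = eOk := by
  rw [omul, ← add_smul, okMu_add_conj, one_smul, trace_eOk_mul_eOk]
  ext i j
  fin_cases i <;> fin_cases j <;> simp [eOk] <;> norm_num

lemma omul_eOk_omul_eOk (hw : w.trace = 0) : omul eOk (omul w eOk) = w := by
  have h := omul_omul_add_omul_omul trace_eOk hw trace_eOk
  norm_num [trace_eOk_mul_eOk, ← two_smul ℂ] at h
  exact h

lemma omul_omul_eOk_eOk (hw : w.trace = 0) : omul (omul eOk w) eOk = w := by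
  have h := omul_omul_add_omul_omul' trace_eOk hw trace_eOk
  norm_num [trace_eOk_mul_eOk, ← two_smul ℂ] at h
  exact h

lemma tauOk_eq (hw : w.trace = 0) :
    tauOk w = ((1 / 3 : ℂ) * (eOk * w).trace) • eOk - omul w eOk := by
  have h := omul_omul_add_omul_omul trace_eOk trace_eOk hw
  rw [omul_eOk_eOk] at h
  rw [tauOk, ← h, add_sub_cancel_right]

lemma tauOkSq_eq (hw : w.trace = 0) :
    tauOkSq w = ((1 / 3 : ℂ) * (w * eOk).trace) • eOk - omul eOk w := by
  have h := omul_omul_add_omul_omul' hw trace_eOk trace_eOk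
  rw [omul_eOk_eOk] at h
  rw [tauOkSq, ← h, add_sub_cancel_right]

lemma omul_eOk_tauOk (hw : w.trace = 0) :
    omul eOk (tauOk w) = ((1 / 3 : ℂ) * (eOk * w).trace) • eOk - w := by
  rw [tauOk_eq hw, omul_sub, omul_smul, omul_eOk_eOk, omul_eOk_omul_eOk hw]

lemma omul_tauOkSq_eOk (hw : w.trace = 0) :
    omul (tauOkSq w) eOk = ((1 / 3 : ℂ) * (w * eOk).trace) • eOk - w := by
  rw [tauOkSq_eq hw, sub_omul, smul_omul, omul_eOk_eOk, omul_omul_eOk_eOk hw]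

end Idempotent

lemma opolar_eq (x y : M3) : opolar x y = (1 / 3) * ((x * y).trace).re := by
  simp only [opolar, onorm, add_mul, mul_add, trace_add, add_re, trace_mul_comm y x]
  ring

lemma Matrix.IsHermitian.trace_mul_ofReal_re {n : Type*} [Fintype n] {x y : Matrix n n ℂ}
    (hx : x.IsHermitian) (hy : y.IsHermitian) : (((x * y).trace.re : ℝ) : ℂ) = (x * y).trace := by
  rw [← conj_eq_iff_re, ← star_def, ← trace_conjTranspose, conjTranspose_mul, hx.eq, hy.eq,
    trace_mul_comm]

section Conjugation

variable {x : M3}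

lemma okBar_eq (hx : x.IsHermitian) : okBar x = ((1 / 3 : ℂ) * (x * eOk).trace) • eOk - x := by
  rw [okBar, opolar_eq, ← Complex.coe_smul, ofReal_mul, hx.trace_mul_ofReal_re isHermitian_eOk]
  norm_num

lemma trace_okBar (hx : x ∈ Okubo) : (okBar x).trace = 0 := by
  rw [okBar_eq hx.1, trace_sub, trace_smul, trace_eOk, hx.2, smul_zero, sub_zero]

lemma omul_eOk_tauOk_okBar (hx : x ∈ Okubo) : omul eOk (tauOk (okBar x)) = x := by
  rw [omul_eOk_tauOk (trace_okBar hx), okBar_eq hx.1]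
  simp only [mul_sub, mul_smul_comm, trace_sub, trace_smul, trace_eOk_mul_eOk, smul_eq_mul,
    trace_mul_comm eOk x]
  module

lemma omul_tauOkSq_okBar_eOk (hx : x ∈ Okubo) : omul (tauOkSq (okBar x)) eOk = x := by
  rw [omul_tauOkSq_eOk (trace_okBar hx), okBar_eq hx.1]
  simp only [sub_mul, smul_mul_assoc, trace_sub, trace_smul, trace_eOk_mul_eOk, smul_eq_mul]
  module

end Conjugation

/-- For all `x, y ∈ 𝒪` one has `x*y = τ(x̄)·τ²(ȳ)`,
i.e. `x*y = (e*τ(x̄)) * (τ²(ȳ)*e)`. -/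
theorem okubo_paper_stmt10 :
    ∀ x ∈ Okubo, ∀ y ∈ Okubo,
      omul x y = udot (tauOk (okBar x)) (tauOkSq (okBar y)) := by
  intro x hx y hy
  rw [udot, omul_eOk_tauOk_okBar hx, omul_tauOkSq_okBar_eOk hy]

end
end

section
/- Let x, y ∈ 𝒪 with y ≠ 0, and write V(a,b) = (a, b, a*b; n(b), n(a), 1) ∈ 𝒪³×ℝ³ for the Veronese image of an affine point (a,b). Then the cyclic permutation of the Veronese image of (x,y) is a positive real multiple of the Veronese image of the point (n(y)⁻¹·y, n(y)⁻¹·(x*y)): explicitly, (y, x*y, x; n(x), 1, n(y)) = n(y)·V(n(y)⁻¹·y, n(y)⁻¹·(x*y)). In particular the triality collineation permuting Veronese coordinates acts on affine points with y ≠ 0 by (x,y) ↦ n(y)⁻¹·(y, x*y). -/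
/-
For traceless `3 × 3` matrices the polarized Cayley–Hamilton identity
`yxy + y²x + xy² = ½Tr(y²)x + Tr(xy)y + Tr(xy²)·1`, together with `μ + μ̄ = 1` and
`μμ̄ = 1/3`, gives `y*(x*y) = n(y)x`; multiplying the same identity by `x` and taking traces
gives `n(x*y) = n(x)n(y)`. For Hermitian `y ≠ 0`, `6n(y) = Tr(yᴴy) > 0`. Scaling the Veronese
image of `(n(y)⁻¹y, n(y)⁻¹(x*y))` by `n(y)` then recovers `(y, x*y, x; n(x), 1, n(y))`
coordinatewise.
-/

open Matrix Complex

noncomputable section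

/-- The Veronese image `V(a,b) = (a, b, a*b; n(b), n(a), 1)` of an affine point. -/
def okVer (a b : M3) : (M3 × M3 × M3) × (ℝ × ℝ × ℝ) :=
  ((a, b, omul a b), (onorm b, onorm a, 1))

open scoped ComplexOrder ComplexConjugate

theorem conj_okMu : conj okMu = (3 - (Real.sqrt 3 : ℂ) * Complex.I) / 6 := by
  rw [okMu, map_div₀, map_add, map_mul, Complex.conj_I, Complex.conj_ofReal, map_ofNat,
    map_ofNat]
  ring

theorem okMu_add_conj_okMu : okMu + conj okMu = 1 := by
  rw [conj_okMu, okMu]; ring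

theorem okMu_mul_conj_okMu : okMu * conj okMu = 1 / 3 := by
  have hsqrt : ((Real.sqrt 3 : ℝ) : ℂ) ^ 2 = 3 := by
    norm_cast; rw [Real.sq_sqrt]; norm_num
  rw [conj_okMu, okMu]
  linear_combination (-((Real.sqrt 3 : ℝ) : ℂ) ^ 2 / 36) * Complex.I_sq + (1 / 36) * hsqrt

section Traceless

variable {x y : M3}

theorem polarized_cayleyHamilton (hx : x.trace = 0) (hy : y.trace = 0) :
    y * x * y + y * y * x + x * y * y
      = ((y * y).trace / 2) • x + (x * y).trace • y + (x * y * y).trace • (1 : M3) := by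
  have entry_eq (z : M3) (hz : z.trace = 0) : z 2 2 = -(z 0 0 + z 1 1) := by
    simp only [Matrix.trace, Fin.sum_univ_three, Matrix.diag] at hz
    linear_combination hz
  ext i j
  fin_cases i <;> fin_cases j <;>
    simp [Matrix.mul_apply, Fin.sum_univ_three, Matrix.trace, Matrix.diag,
      entry_eq x hx, entry_eq y hy] <;> ring

theorem trace_mul_sq_add_two_trace_sq_mul_sq (hx : x.trace = 0) (hy : y.trace = 0) :
    (x * y * (x * y)).trace + 2 * (x * x * (y * y)).trace
      = (x * x).trace * (y * y).trace / 2 + (x * y).trace ^ 2 := by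
  have h := congrArg (fun m => (x * m).trace) (polarized_cayleyHamilton hx hy)
  have hcyc : (x * y * y * x).trace = (x * x * y * y).trace := by
    rw [trace_mul_comm]; simp only [← mul_assoc]
  simp only [mul_add, mul_smul_comm, mul_one, trace_add, trace_smul, smul_eq_mul, hx,
    ← mul_assoc, hcyc] at h ⊢
  linear_combination h

theorem omul_omul_eq_trace_smul (hx : x.trace = 0) (hy : y.trace = 0) :
    omul y (omul x y) = ((y * y).trace / 6) • x := by
  have hyyx : (y * y * x).trace = (x * y * y).trace := by
    rw [trace_mul_comm, ← mul_assoc]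
  have hyxy : (y * x * y).trace = (x * y * y).trace := by
    rw [trace_mul_comm, ← mul_assoc, hyyx]
  calc omul y (omul x y)
      = (1 / 3 : ℂ) • (y * x * y + y * y * x + x * y * y) - ((x * y).trace / 3) • y
          - ((x * y * y).trace / 3) • (1 : M3) := by
        simp only [omul, mul_add, add_mul, mul_sub, sub_mul, smul_mul_assoc, mul_smul_comm,
          smul_eq_mul, mul_one, one_mul, trace_add, trace_sub, trace_smul,
          ← mul_assoc, hyyx, hyxy, hy]
        match_scalars
        · linear_combination (okMu + conj okMu + 1) * okMu_add_conj_okMu - 2 * okMu_mul_conj_okMu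
        · linear_combination okMu_mul_conj_okMu
        · linear_combination (-(x * y).trace / 3) * okMu_add_conj_okMu
        · linear_combination okMu_mul_conj_okMu
        · linear_combination (-(x * y * y).trace / 3) * okMu_add_conj_okMu
    _ = ((y * y).trace / 6) • x := by
        rw [polarized_cayleyHamilton hx hy]; module

theorem trace_omul_mul_self (hx : x.trace = 0) (hy : y.trace = 0) :
    (omul x y * omul x y).trace = (x * x).trace * (y * y).trace / 6 := by
  have hT := trace_mul_sq_add_two_trace_sq_mul_sq hx hy
  have hxyyx : (x * y * y * x).trace = (x * x * y * y).trace := by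
    rw [trace_mul_comm]; simp only [← mul_assoc]
  have hyxxy : (y * x * x * y).trace = (x * x * y * y).trace := by
    rw [trace_mul_comm]; simp only [← mul_assoc]
    rw [mul_assoc, trace_mul_comm]; simp only [← mul_assoc]
  have hyxyx : (y * x * y * x).trace = (x * y * x * y).trace := by
    rw [trace_mul_comm]; simp only [← mul_assoc]
  have hyx : (y * x).trace = (x * y).trace := trace_mul_comm y x
  simp only [omul, mul_add, add_mul, mul_sub, sub_mul, smul_mul_assoc, mul_smul_comm,
    smul_eq_mul, mul_one, one_mul, trace_add, trace_sub, trace_smul, trace_one,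
    Fintype.card_fin, Nat.cast_ofNat, ← mul_assoc, hxyyx, hyxxy, hyxyx, hyx] at hT ⊢
  linear_combination (1 / 3) * hT
    + ((okMu + conj okMu + 1) * (x * y * x * y).trace - 2 / 3 * (x * y).trace ^ 2)
      * okMu_add_conj_okMu
    + (2 * (x * x * y * y).trace - 2 * (x * y * x * y).trace) * okMu_mul_conj_okMu

end Traceless

theorem trace_mul_self_of_isHermitian {x : M3} (hx : x.IsHermitian) :
    (x * x).trace = ((6 * onorm x : ℝ) : ℂ) := by
  have hnonneg : 0 ≤ (x * x).trace := by
    simpa only [hx.eq] using (posSemidef_conjTranspose_mul_self x).trace_nonneg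
  apply Complex.ext
  · simp only [onorm, Complex.ofReal_re]; ring
  · simpa using (Complex.nonneg_iff.mp hnonneg).2.symm

theorem onorm_pos_of_isHermitian {y : M3} (hy : y.IsHermitian) (hy0 : y ≠ 0) :
    0 < onorm y := by
  have hpos : 0 < (yᴴ * y).trace :=
    (posSemidef_conjTranspose_mul_self y).trace_nonneg.lt_of_ne'
      (trace_conjTranspose_mul_self_eq_zero_iff.not.mpr hy0)
  rw [hy.eq, trace_mul_self_of_isHermitian hy, Complex.zero_lt_real] at hpos
  linarith

theorem omul_smul_left (r : ℝ) (a b : M3) : omul (r • a) b = r • omul a b := by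
  simp only [omul, smul_mul_assoc, mul_smul_comm, trace_smul, smul_sub, smul_add,
    smul_comm r, smul_assoc]

theorem omul_smul_right (r : ℝ) (a b : M3) : omul a (r • b) = r • omul a b := by
  simp only [omul, smul_mul_assoc, mul_smul_comm, trace_smul, smul_sub, smul_add,
    smul_comm r, smul_assoc]

theorem onorm_smul (r : ℝ) (x : M3) : onorm (r • x) = r ^ 2 * onorm x := by
  rw [onorm, onorm, smul_mul_smul_comm, trace_smul, Complex.smul_re, smul_eq_mul]
  ring

theorem onorm_omul {x y : M3} (hx : x ∈ Okubo) (hy : y ∈ Okubo) :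
    onorm (omul x y) = onorm x * onorm y := by
  rw [onorm, trace_omul_mul_self hx.2 hy.2, trace_mul_self_of_isHermitian hx.1,
    trace_mul_self_of_isHermitian hy.1, ← Complex.ofReal_mul, ← Complex.ofReal_ofNat,
    ← Complex.ofReal_div, Complex.ofReal_re]
  ring

theorem omul_omul_eq_onorm_smul {x y : M3} (hx : x ∈ Okubo) (hy : y ∈ Okubo) :
    omul y (omul x y) = onorm y • x := by
  rw [omul_omul_eq_trace_smul hx.2 hy.2, trace_mul_self_of_isHermitian hy.1, ← Complex.coe_smul]
  congr 1
  push_cast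
  ring

/-- For `x, y ∈ 𝒪` with `y ≠ 0`, the cyclic permutation of the
Veronese image of `(x,y)` is the positive real multiple (by `n(y) > 0`) of the
Veronese image of the point `(n(y)⁻¹ • y, n(y)⁻¹ • (x*y))`; in particular the
triality collineation acts on affine points with `y ≠ 0` by
`(x,y) ↦ n(y)⁻¹ • (y, x*y)`. -/
theorem okubo_paper_stmt17 (x y : M3) (hx : x ∈ Okubo) (hy : y ∈ Okubo)
    (hy0 : y ≠ 0) :
    0 < onorm y ∧
    ((y, omul x y, x), (onorm x, (1 : ℝ), onorm y)) =
      onorm y • okVer ((onorm y)⁻¹ • y) ((onorm y)⁻¹ • omul x y) := by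
  have hn : 0 < onorm y := onorm_pos_of_isHermitian hy.1 hy0
  refine ⟨hn, ?_⟩
  simp only [okVer, Prod.smul_mk, smul_inv_smul₀ hn.ne', omul_smul_left, omul_smul_right,
    omul_omul_eq_onorm_smul hx hy, onorm_smul, onorm_omul hx hy, smul_smul, smul_eq_mul]
  field_simp
  rw [one_smul]

end
end
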